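/- arXiv:2404.14597 — 2 statements merged into one kernel-verified Lean document; each statement's English description precedes it below -/
import Mathlib

section
/- Let σ be a (u,v)-simplex of the bisimplicial nerve of Path(l), i.e. data of integers 0 ≤ i₀ ≤ i₁ ≤ ... ≤ i_u ≤ l together with, for each 0 ≤ m < u, a chain of v composable 2-morphisms (inclusions of subsets) in Hom_{Path(l)}(i_m, i_{m+1}). If σ is non-degenerate, then u + v ≤ l. -/
/-!
Weigh the `r`-th row of the simplex by `F r = ∑ m, #(S m r)`. Every endpoint pair is a pair of
distinct elements, so `2u ≤ F 0`; every row step is non-trivial in some column, so `F` grows by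
at least one per step and `F 0 + v ≤ F v`; and `S m v ⊆ [idx m, idx (m+1)]` bounds `F v` by the
telescoping sum `idx u - idx 0 + u ≤ l + u`.
-/

open Finset

theorem add_le_of_forall_lt_succ {f : ℕ → ℕ} {v : ℕ} (hf : ∀ r < v, f r < f (r + 1)) :
    f 0 + v ≤ f v := by
  induction v with
  | zero => rfl
  | succ v ih =>
    have := ih fun r hr => hf r (by omega)
    have := hf v (by omega)
    omega

theorem Finset.card_le_sub_add_one_of_subset_Icc {s : Finset ℕ} {a b : ℕ} (hab : a ≤ b)
    (hs : s ⊆ Icc a b) : (#s : ℤ) ≤ b - a + 1 := by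
  have := card_le_card hs
  rw [Nat.card_Icc] at this
  omega

theorem sum_card_le_of_subset_Icc {u : ℕ} {idx : ℕ → ℕ} {S : ℕ → Finset ℕ}
    (hmono : ∀ m < u, idx m ≤ idx (m + 1)) (hS : ∀ m < u, S m ⊆ Icc (idx m) (idx (m + 1))) :
    (∑ m ∈ range u, #(S m) : ℤ) ≤ idx u - idx 0 + u := by
  calc (∑ m ∈ range u, #(S m) : ℤ)
      ≤ ∑ m ∈ range u, (((idx (m + 1) : ℤ) - idx m) + 1) :=
        sum_le_sum fun m hm =>
          card_le_sub_add_one_of_subset_Icc (hmono m (mem_range.1 hm)) (hS m (mem_range.1 hm))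
    _ = idx u - idx 0 + u := by
        rw [sum_add_distrib, sum_range_sub (fun m => (idx m : ℤ))]
        simp

/-- A non-degenerate `(u,v)`-simplex of the bisimplicial nerve of `Path(l)` — a weakly
increasing sequence `idx 0 ≤ ... ≤ idx u ≤ l` together with, for each `m < u`, a chain
`S m 0 ⊆ ... ⊆ S m v` of subsets of `[idx m, idx (m+1)]` containing both endpoints,
which is neither horizontally degenerate (`idx m = idx (m+1)` for some `m`) nor vertically
degenerate (some step `r` of all chains trivial) — satisfies `u + v ≤ l`. -/
theorem stmt_4 (l u v : ℕ) (idx : ℕ → ℕ) (S : ℕ → ℕ → Finset ℕ)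
    (hmono : ∀ m < u, idx m ≤ idx (m + 1)) (hbound : idx u ≤ l)
    (hS : ∀ m < u, ∀ r ≤ v, S m r ⊆ Finset.Icc (idx m) (idx (m + 1)) ∧
      idx m ∈ S m r ∧ idx (m + 1) ∈ S m r)
    (hchain : ∀ m < u, ∀ r < v, S m r ⊆ S m (r + 1))
    (hnd₁ : ∀ m < u, idx m ≠ idx (m + 1))
    (hnd₂ : ∀ r < v, ∃ m, m < u ∧ S m r ≠ S m (r + 1)) :
    u + v ≤ l := by
  set F : ℕ → ℕ := fun r => ∑ m ∈ range u, #(S m r)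
  have hF0 : ∑ _m ∈ range u, 2 ≤ F 0 := sum_le_sum fun m hm => by
    obtain ⟨-, hlo, hhi⟩ := hS m (mem_range.1 hm) 0 (Nat.zero_le v)
    exact one_lt_card.2 ⟨_, hlo, _, hhi, hnd₁ m (mem_range.1 hm)⟩
  have hstep : ∀ r < v, F r < F (r + 1) := fun r hr => by
    obtain ⟨m, hm, hne⟩ := hnd₂ r hr
    exact sum_lt_sum (fun i hi => card_le_card (hchain i (mem_range.1 hi) r hr))
      ⟨m, mem_range.2 hm, card_lt_card ((hchain m hm r hr).lt_of_ne hne)⟩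
  have hFv : (F v : ℤ) ≤ idx u - idx 0 + u := by
    simpa [F] using sum_card_le_of_subset_Icc hmono fun m hm => (hS m hm v le_rfl).1
  have hgrowth := add_le_of_forall_lt_succ hstep
  simp only [sum_const, card_range, smul_eq_mul] at hF0
  omega
end

section
/- Let C be an (ordinary) category with finite limits, and F : A × B → C a functor from a product of small categories. Suppose A₀ ⊆ A and B₀ ⊆ B are full subcategories. Then F is a (pointwise) right Kan extension of its restriction to A₀ × B₀ if and only if: (i) F is a right Kan extension of its restriction to A₀ × B, and (ii) for every a₀ ∈ A₀ the restricted functor F(a₀, −) : B → C is a right Kan extension of its restriction to B₀. -/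
/-!
The comma category of `(a, b)` under `IA × IB` is the product of the comma categories
`a / IA` and `b / IB`, so by Fubini the limit over it can be taken first over `b / IB` and then
over `a / IA`. Under (ii) the inner limit at `u : a ⟶ IA a₀` is `F (IA a₀, b)`, and the outer
limit of these is the limit over the comma category of `(a, b)` under `IA × 𝟭`, in which
`b / 𝟭` contributes only its initial object `𝟙 b`. Hence, given (ii), the two pointwise
conditions agree at every `(a, b)`. Conversely, when `IA` is fully faithful, `a₀ / IA` has the
initial object `𝟙 (IA a₀)`, so the pointwise condition at `(IA a₀, b)` is exactly (ii).
-/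

open CategoryTheory Limits Functor
open scoped CategoryTheory.Prod

namespace CategoryTheory.Limits

variable {J K C : Type*} [Category J] [Category K] [Category C] {F : J ⥤ K ⥤ C}

def DiagramOfCones.coneUncurry (D : DiagramOfCones F) (s : Cone D.conePoints) :
    Cone (uncurry.obj F) where
  pt := s.pt
  π :=
    { app p := s.π.app p.1 ≫ (D.obj p.1).π.app p.2
      naturality := by
        rintro ⟨j, k⟩ ⟨j', k'⟩ ⟨f, g⟩
        have hs := s.w f
        have hD := (D.map f).w k'
        have hg := (D.obj j).w g
        dsimp at hs hD hg ⊢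
        rw [Category.id_comp, ← hs]
        erw [Category.assoc, hD]
        rw [← hg]
        simp only [Category.assoc, NatTrans.naturality]
        exact (Category.assoc (s.π.app j) ((D.obj j).π.app k) _).symm }

def DiagramOfCones.isLimitConeUncurryEquiv (D : DiagramOfCones F)
    (Q : ∀ j, IsLimit (D.obj j)) (s : Cone D.conePoints) :
    IsLimit (D.coneUncurry s) ≃ IsLimit s :=
  let e : coneOfConeUncurry Q (D.coneUncurry s) ≅ s :=
    Cone.ext (Iso.refl _) fun j => (Q j).hom_ext fun k =>
      ((Q j).fac _ k).trans (congrArg (· ≫ _) (Category.id_comp (s.π.app j)).symm)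
  equivOfSubsingletonOfSubsingleton
    (fun h => (coneOfConeUncurryIsLimit Q h).ofIsoLimit e)
    (fun h => IsLimit.ofConeOfConeUncurry Q (h.ofIsoLimit e.symm))

end CategoryTheory.Limits

namespace CategoryTheory.Prod

variable (J : Type*) {K : Type*} [Category J] [Category K]

def sectLAdjunction {k₀ : K} (hk : IsInitial k₀) : sectL J k₀ ⊣ fst J K :=
  Adjunction.mkOfHomEquiv
    { homEquiv _ _ :=
        { toFun f := f.1
          invFun f := (f, hk.to _)
          left_inv f := Prod.ext rfl (hk.hom_ext _ _)
          right_inv _ := rfl }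
      homEquiv_naturality_left_symm _ _ := Prod.ext rfl (hk.hom_ext _ _) }

lemma initial_sectL {k₀ : K} (hk : IsInitial k₀) : (sectL J k₀).Initial :=
  Functor.initial_of_adjunction (sectLAdjunction J hk)

variable {J} (K)

def sectRAdjunction {j₀ : J} (hj : IsInitial j₀) : sectR j₀ K ⊣ snd J K :=
  Adjunction.mkOfHomEquiv
    { homEquiv _ _ :=
        { toFun f := f.2
          invFun f := (hj.to _, f)
          left_inv f := Prod.ext (hj.hom_ext _ _) rfl
          right_inv _ := rfl }
      homEquiv_naturality_left_symm _ _ := Prod.ext (hj.hom_ext _ _) rfl }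

lemma initial_sectR {j₀ : J} (hj : IsInitial j₀) : (sectR j₀ K).Initial :=
  Functor.initial_of_adjunction (sectRAdjunction K hj)

end CategoryTheory.Prod

namespace CategoryTheory.Functor.RightExtension

abbrev ofRestriction {X Y C : Type*} [Category X] [Category Y] [Category C] (L : X ⥤ Y)
    (F : Y ⥤ C) : RightExtension L (L ⋙ F) :=
  mk F (𝟙 (L ⋙ F))

universe v₁ v₂ v₃ v₄ v₅ u₁ u₂ u₃ u₄ u₅

variable {A₀ : Type u₁} {A : Type u₂} {B₀ : Type u₃} {B : Type u₄} {C : Type u₅}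
  [Category.{v₁} A₀] [Category.{v₂} A] [Category.{v₃} B₀] [Category.{v₄} B] [Category.{v₅} C]
  (IA : A₀ ⥤ A) (IB : B₀ ⥤ B) (F : A × B ⥤ C)

abbrev structuredArrowBifunctor (a : A) (b : B) :
    StructuredArrow a IA ⥤ StructuredArrow b IB ⥤ C :=
  StructuredArrow.proj a IA ⋙ IA ⋙ curry.obj F ⋙ (whiskeringLeft _ _ C).obj IB ⋙
    (whiskeringLeft _ _ C).obj (StructuredArrow.proj b IB)

def structuredArrowDiagramOfCones (a : A) (b : B) :
    DiagramOfCones (structuredArrowBifunctor IA IB F a b) where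
  obj u := (ofRestriction IB ((curry.obj F).obj (IA.obj u.right))).coneAt b
  map f :=
    { hom := F.map (IA.map f.right ×ₘ 𝟙 b)
      w v := by
        change F.map (IA.map f.right ×ₘ 𝟙 b) ≫ F.map (𝟙 _ ×ₘ v.hom) ≫ 𝟙 _ =
          (F.map (𝟙 _ ×ₘ v.hom) ≫ 𝟙 _) ≫ F.map (IA.map f.right ×ₘ 𝟙 _)
        simp only [Category.comp_id, ← F.map_comp, prod_comp, Category.id_comp] }
  id u := by
    change F.map (IA.map (𝟙 u.right) ×ₘ 𝟙 b) = 𝟙 _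
    simp
  comp f g := by
    change F.map (IA.map (f.right ≫ g.right) ×ₘ 𝟙 b) =
      F.map (IA.map f.right ×ₘ 𝟙 b) ≫ F.map (IA.map g.right ×ₘ 𝟙 b)
    rw [← F.map_comp, prod_comp, IA.map_comp, Category.comp_id]

def uncurryStructuredArrowBifunctorIso (a : A) (b : B) :
    uncurry.obj (structuredArrowBifunctor IA IB F a b) ≅
      (StructuredArrow.prodEquivalence a b IA IB).inverse ⋙
        StructuredArrow.proj (a, b) (IA.prod IB) ⋙ IA.prod IB ⋙ F :=
  NatIso.ofComponents (fun _ => Iso.refl _) fun _ => by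
    change (F.map (IA.map _ ×ₘ 𝟙 _) ≫ F.map (𝟙 _ ×ₘ IB.map _)) ≫ 𝟙 _ =
      𝟙 _ ≫ F.map (IA.map _ ×ₘ IB.map _)
    simp only [Category.comp_id, ← F.map_comp, prod_comp, Category.id_comp]
    rfl

def coneUncurryStructuredArrowDiagramOfConesIso (a : A) (b : B) :
    (Cone.postcompose (uncurryStructuredArrowBifunctorIso IA IB F a b).hom).obj
      ((structuredArrowDiagramOfCones IA IB F a b).coneUncurry
        (((ofRestriction (IA.prod (𝟭 B)) F).coneAt (a, b)).whisker
          (Prod.sectL _ (StructuredArrow.mk (𝟙 b)) ⋙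
            (StructuredArrow.prodEquivalence a b IA (𝟭 B)).inverse))) ≅
    ((ofRestriction (IA.prod IB) F).coneAt (a, b)).whisker
      (StructuredArrow.prodEquivalence a b IA IB).inverse :=
  Cone.ext (Iso.refl _) fun p => by
    change ((F.map (p.1.hom ×ₘ 𝟙 b) ≫ 𝟙 _) ≫ (F.map (𝟙 _ ×ₘ p.2.hom) ≫ 𝟙 _)) ≫ 𝟙 _ =
      𝟙 _ ≫ F.map (p.1.hom ×ₘ p.2.hom) ≫ 𝟙 _
    simp only [Category.comp_id, Category.id_comp, ← F.map_comp, prod_comp]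

noncomputable def isPointwiseRightKanExtensionAtProdEquiv {a : A} {b : B}
    (hB : ∀ a₀ : A₀,
      (ofRestriction IB ((curry.obj F).obj (IA.obj a₀))).IsPointwiseRightKanExtensionAt b) :
    (ofRestriction (IA.prod IB) F).IsPointwiseRightKanExtensionAt (a, b) ≃
      (ofRestriction (IA.prod (𝟭 B)) F).IsPointwiseRightKanExtensionAt (a, b) :=
  haveI : (Prod.sectL (StructuredArrow a IA) (StructuredArrow.mk (T := 𝟭 B) (𝟙 b))).Initial :=
    Prod.initial_sectL _ StructuredArrow.mkIdInitial
  (Initial.isLimitWhiskerEquiv (StructuredArrow.prodEquivalence a b IA IB).inverse _).symm.trans <|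
    (IsLimit.equivOfNatIsoOfIso _ _ _
      (coneUncurryStructuredArrowDiagramOfConesIso IA IB F a b)).symm.trans <|
      ((structuredArrowDiagramOfCones IA IB F a b).isLimitConeUncurryEquiv
        (fun u => hB u.right) _).trans
        (Initial.isLimitWhiskerEquiv _ _)

noncomputable def isPointwiseRightKanExtensionAtCurryOfProd [IA.Full] [IA.Faithful] {a₀ : A₀}
    {b : B} (h : (ofRestriction (IA.prod IB) F).IsPointwiseRightKanExtensionAt (IA.obj a₀, b)) :
    (ofRestriction IB ((curry.obj F).obj (IA.obj a₀))).IsPointwiseRightKanExtensionAt b :=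
  haveI : (Prod.sectR (StructuredArrow.mk (𝟙 (IA.obj a₀))) (StructuredArrow b IB)).Initial :=
    Prod.initial_sectR _ StructuredArrow.mkIdInitial
  let e : (Prod.sectR (StructuredArrow.mk (𝟙 (IA.obj a₀))) (StructuredArrow b IB) ⋙
        (StructuredArrow.prodEquivalence (IA.obj a₀) b IA IB).inverse) ⋙
        StructuredArrow.proj (IA.obj a₀, b) (IA.prod IB) ⋙ IA.prod IB ⋙ F ≅
      StructuredArrow.proj b IB ⋙ IB ⋙ (curry.obj F).obj (IA.obj a₀) :=
    NatIso.ofComponents (fun _ => Iso.refl _) fun g => by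
      change F.map (IA.map (𝟙 a₀) ×ₘ IB.map g.right) ≫ 𝟙 _ = 𝟙 _ ≫ F.map (𝟙 _ ×ₘ IB.map g.right)
      simp
  IsLimit.equivOfNatIsoOfIso e _ (RightExtension.coneAt _ b)
    (Cone.ext (Iso.refl _) fun v => by
      change (F.map (𝟙 _ ×ₘ v.hom) ≫ 𝟙 _) ≫ 𝟙 _ = 𝟙 _ ≫ F.map (𝟙 _ ×ₘ v.hom) ≫ 𝟙 _
      simp only [Category.comp_id, Category.id_comp])
    ((Initial.isLimitWhiskerEquiv _ _).symm h)

end CategoryTheory.Functor.RightExtension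

theorem stmt_14_general {A₀ B₀ A B C : Type*} [Category A₀] [Category B₀] [Category A] [Category B]
    [Category C]
    (IA : A₀ ⥤ A) (IB : B₀ ⥤ B) [IA.Full] [IA.Faithful]
    (F : A × B ⥤ C) :
    Nonempty
        ((Functor.RightExtension.mk F
          (𝟙 ((IA.prod IB) ⋙ F))).IsPointwiseRightKanExtension) ↔
      (Nonempty ((Functor.RightExtension.mk F
          (𝟙 ((IA.prod (𝟭 B)) ⋙ F))).IsPointwiseRightKanExtension) ∧
        ∀ a₀ : A₀, Nonempty ((Functor.RightExtension.mk ((Functor.curry.obj F).obj (IA.obj a₀))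
          (𝟙 (IB ⋙ (Functor.curry.obj F).obj (IA.obj a₀)))).IsPointwiseRightKanExtension)) := by
  constructor
  · rintro ⟨h⟩
    have hB a₀ b :=
      RightExtension.isPointwiseRightKanExtensionAtCurryOfProd IA IB F (h (IA.obj a₀, b))
    exact ⟨⟨fun ⟨a, b⟩ =>
      RightExtension.isPointwiseRightKanExtensionAtProdEquiv IA IB F (hB · b) (h (a, b))⟩,
      fun a₀ => ⟨hB a₀⟩⟩
  · rintro ⟨⟨h⟩, hB⟩
    exact ⟨fun ⟨a, b⟩ =>
      (RightExtension.isPointwiseRightKanExtensionAtProdEquiv IA IB F fun a₀ =>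
        (hB a₀).some b).symm (h (a, b))⟩

/-- Let `C` be a category with (all relevant) limits, `F : A × B ⥤ C`, and let
`IA : A₀ ⥤ A`, `IB : B₀ ⥤ B` be (inclusions of) full subcategories.  Then `F` is a pointwise
right Kan extension of its restriction to `A₀ × B₀` if and only if (i) `F` is a pointwise
right Kan extension of its restriction to `A₀ × B`, and (ii) for every `a₀ ∈ A₀`, the functor
`F(a₀, -) : B ⥤ C` is a pointwise right Kan extension of its restriction to `B₀`. -/
theorem stmt_14 {A₀ B₀ A B C : Type*} [Category A₀] [Category B₀] [Category A] [Category B]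
    [Category C] [Limits.HasLimits C]
    (IA : A₀ ⥤ A) (IB : B₀ ⥤ B) [IA.Full] [IA.Faithful] [IB.Full] [IB.Faithful]
    (F : A × B ⥤ C) :
    Nonempty
        ((Functor.RightExtension.mk F
          (𝟙 ((IA.prod IB) ⋙ F))).IsPointwiseRightKanExtension) ↔
      (Nonempty ((Functor.RightExtension.mk F
          (𝟙 ((IA.prod (𝟭 B)) ⋙ F))).IsPointwiseRightKanExtension) ∧
        ∀ a₀ : A₀, Nonempty ((Functor.RightExtension.mk ((Functor.curry.obj F).obj (IA.obj a₀))
          (𝟙 (IB ⋙ (Functor.curry.obj F).obj (IA.obj a₀)))).IsPointwiseRightKanExtension)) :=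
  stmt_14_general IA IB F
end
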